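/- Let f : X → Y be an irreducible morphism in C_I(P) between minimal projective complexes. If there exists t ≥ 0 such that X^j = 0 for all j > 0, Y^j = 0 for all j < -t, X^{-(t+1)} ≠ 0, and Y^j ≠ 0 for some j > 0, then f is sirreducible. -/

import Mathlib

/-! Statement 2: Lemma 1(b) of the paper. -/

open CategoryTheory CategoryTheory.Limits

namespace ARShapes

variable {Λ : Type} [Ring Λ]

/-- Cochain complexes of (right) `Λ`-modules, i.e. `Λᵐᵒᵖ`-modules, indexed by `ℤ`. -/
abbrev Cplx (Λ : Type) [Ring Λ] : Type 1 := CochainComplex (ModuleCat Λᵐᵒᵖ) ℤ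

/-- A minimal projective complex: a complex of finitely generated projective right
`Λ`-modules whose differentials have image contained in the radical of the target. -/
def IsMinimalProjective (X : Cplx Λ) : Prop :=
  (∀ i : ℤ, Module.Finite Λᵐᵒᵖ (X.X i)) ∧ (∀ i : ℤ, Module.Projective Λᵐᵒᵖ (X.X i)) ∧
    (∀ i : ℤ, LinearMap.range (X.d i (i + 1)).hom ≤
      (Ideal.jacobson (⊥ : Ideal Λᵐᵒᵖ)) • (⊤ : Submodule Λᵐᵒᵖ (X.X (i + 1))))

/-- Irreducibility of a morphism in the category `P` of finitely generated projective
right `Λ`-modules (a full subcategory of all modules). -/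
def IrreducibleP {M N : ModuleCat Λᵐᵒᵖ} (φ : M ⟶ N) : Prop :=
  ¬ IsSplitMono φ ∧ ¬ IsSplitEpi φ ∧
    ∀ (Z : ModuleCat Λᵐᵒᵖ), Module.Finite Λᵐᵒᵖ Z → Module.Projective Λᵐᵒᵖ Z →
      ∀ (g : M ⟶ Z) (h : Z ⟶ N), φ = g ≫ h → IsSplitMono g ∨ IsSplitEpi h

/-- A chain map is smonic if all of its components are split monomorphisms. -/
def Smonic {X Y : Cplx Λ} (f : X ⟶ Y) : Prop := ∀ i : ℤ, IsSplitMono (f.f i)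

/-- A chain map is sepic if all of its components are split epimorphisms. -/
def Sepic {X Y : Cplx Λ} (f : X ⟶ Y) : Prop := ∀ i : ℤ, IsSplitEpi (f.f i)

/-- A chain map is sirreducible if there is exactly one index `i₀` where the component is
irreducible in the category of finitely generated projective modules, the components in lower
degrees being split epimorphisms and those in higher degrees split monomorphisms.  (Since an
irreducible morphism is neither a split monomorphism nor a split epimorphism, the uniqueness
of such an index is automatic.) -/
def Sirreducible {X Y : Cplx Λ} (f : X ⟶ Y) : Prop :=
  ∃ i₀ : ℤ, IrreducibleP (f.f i₀) ∧ (∀ i : ℤ, i < i₀ → IsSplitEpi (f.f i)) ∧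
    (∀ i : ℤ, i₀ < i → IsSplitMono (f.f i))

/-- Irreducibility of a chain map in the category `C_I(P)` of minimal projective
complexes (a full subcategory of all complexes). -/
def IrreducibleC {X Y : Cplx Λ} (f : X ⟶ Y) : Prop :=
  ¬ IsSplitMono f ∧ ¬ IsSplitEpi f ∧
    ∀ (Z : Cplx Λ), IsMinimalProjective Z →
      ∀ (g : X ⟶ Z) (h : Z ⟶ Y), f = g ≫ h → IsSplitMono g ∨ IsSplitEpi h


/-! If `f` is irreducible in `C_I(P)`, any factorization `f^{n+1} = h ∘ g` through a finitely
generated projective `Z` can be spliced into a factorization of `f` through the minimal projective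
complex `X^{≤ n} → Z → Y^{≥ n+2}`; so either `g` and all `f^j` with `j > n + 1` are split mono, or
`h` and all `f^j` with `j ≤ n` are split epi. Taking `g = f^{n+1}` shows that the split monos form
an upper tail and the split epis a lower one; the vanishing hypotheses make both proper, which
produces the index `i₀` separating them, and the factorization property above makes `f^{i₀}`
irreducible. That `f^{i₀}` is not split epi comes from a second splice `Y^{≤ i₀} → X^{≥ i₀+1}`,
whose differential in degree `i₀` is `d_X ∘ s` for a section `s` of `f^{i₀}` (it squares to zero
because `f^{i₀-1}` is epi and `f^{i₀+1}` mono): irreducibility would then make `f^{-(t+1)}` split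
mono or some `f^j` with `j > 0` split epi. -/

section Glue

variable {C : Type*} [Category C]

lemma isSplitMono_of_comp {A B D : C} {f : A ⟶ B} {g : B ⟶ D} (_ : IsSplitMono (f ≫ g)) :
    IsSplitMono f :=
  IsSplitMono.mk' ⟨g ≫ retraction (f ≫ g), by rw [← Category.assoc, IsSplitMono.id]⟩

lemma isSplitEpi_of_comp {A B D : C} {f : A ⟶ B} {g : B ⟶ D} (_ : IsSplitEpi (f ≫ g)) :
    IsSplitEpi g :=
  IsSplitEpi.mk' ⟨section_ (f ≫ g) ≫ f, by rw [Category.assoc, IsSplitEpi.id]⟩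

variable [HasZeroMorphisms C] (L U : CochainComplex C ℤ) (n : ℤ) (Z : C)

def glueX (j : ℤ) : C := if j ≤ n then L.X j else if j = n + 1 then Z else U.X j

variable {L U n Z}

lemma glueX_of_le {j : ℤ} (h : j ≤ n) : glueX L U n Z j = L.X j := if_pos h

lemma glueX_succ : glueX L U n Z (n + 1) = Z := by
  rw [glueX, if_neg (by omega), if_pos rfl]

lemma glueX_of_lt {j : ℤ} (h : n + 1 < j) : glueX L U n Z j = U.X j := by
  rw [glueX, if_neg (by omega), if_neg (by omega)]

lemma glueX_induction {P : C → Prop} (hL : ∀ j, P (L.X j)) (hZ : P Z) (hU : ∀ j, P (U.X j))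
    (j : ℤ) : P (glueX L U n Z j) := by
  unfold glueX
  split_ifs
  exacts [hL j, hZ, hU j]

variable {l : L.X n ⟶ Z} {u : Z ⟶ U.X (n + 1 + 1)}

variable (L U n Z l u) in
def glueD (j : ℤ) : glueX L U n Z j ⟶ glueX L U n Z (j + 1) :=
  if h : j + 1 ≤ n then
    eqToHom (glueX_of_le (by omega)) ≫ L.d j (j + 1) ≫ eqToHom (glueX_of_le h).symm
  else if h' : j = n then
    eqToHom (by rw [h']; exact glueX_of_le le_rfl) ≫ l ≫
      eqToHom (by rw [h']; exact glueX_succ.symm)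
  else if h'' : j = n + 1 then
    eqToHom (by rw [h'']; exact glueX_succ) ≫ u ≫
      eqToHom (by rw [h'']; exact (glueX_of_lt (by omega)).symm)
  else
    eqToHom (glueX_of_lt (by omega)) ≫ U.d j (j + 1) ≫ eqToHom (glueX_of_lt (by omega)).symm

lemma glueD_of_le {j : ℤ} (h : j + 1 ≤ n) :
    glueD L U n Z l u j =
      eqToHom (glueX_of_le (by omega)) ≫ L.d j (j + 1) ≫ eqToHom (glueX_of_le h).symm :=
  dif_pos h

lemma glueD_self :
    glueD L U n Z l u n = eqToHom (glueX_of_le le_rfl) ≫ l ≫ eqToHom glueX_succ.symm := by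
  rw [glueD, dif_neg (by omega), dif_pos rfl]

lemma glueD_succ :
    glueD L U n Z l u (n + 1) =
      eqToHom glueX_succ ≫ u ≫ eqToHom (glueX_of_lt (by omega)).symm := by
  rw [glueD, dif_neg (by omega), dif_neg (by omega), dif_pos rfl]

lemma glueD_of_lt {j : ℤ} (h : n + 1 < j) :
    glueD L U n Z l u j =
      eqToHom (glueX_of_lt h) ≫ U.d j (j + 1) ≫ eqToHom (glueX_of_lt (by omega)).symm := by
  rw [glueD, dif_neg (by omega), dif_neg (by omega), dif_neg (by omega)]

lemma glueD_comp_glueD (hl : ∀ i, L.d i n ≫ l = 0) (hlu : l ≫ u = 0)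
    (hu : ∀ i, u ≫ U.d (n + 1 + 1) i = 0) (j : ℤ) :
    glueD L U n Z l u j ≫ glueD L U n Z l u (j + 1) = 0 := by
  obtain h | h | rfl | rfl | h :
      j + 1 + 1 ≤ n ∨ j + 1 = n ∨ j = n ∨ j = n + 1 ∨ n + 1 < j := by omega
  · simp [glueD_of_le h, glueD_of_le (show j + 1 ≤ n by omega)]
  · subst h
    simp [glueD_of_le le_rfl, glueD_self, reassoc_of% (hl j)]
  · simp [glueD_self, glueD_succ, reassoc_of% hlu]
  · simp [glueD_succ, glueD_of_lt (show n + 1 < n + 1 + 1 by omega), reassoc_of% hu]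
  · simp [glueD_of_lt h, glueD_of_lt (show n + 1 < j + 1 by omega)]

variable (L U n Z l u) in
abbrev glue (hl : ∀ i, L.d i n ≫ l = 0) (hlu : l ≫ u = 0)
    (hu : ∀ i, u ≫ U.d (n + 1 + 1) i = 0) : CochainComplex C ℤ :=
  CochainComplex.of (glueX L U n Z) (glueD L U n Z l u) (glueD_comp_glueD hl hlu hu)

variable (hl : ∀ i, L.d i n ≫ l = 0) (hlu : l ≫ u = 0) (hu : ∀ i, u ≫ U.d (n + 1 + 1) i = 0)

section ToGlue

variable {W : CochainComplex C ℤ} (α : W ⟶ L) (z : W.X (n + 1) ⟶ Z) (β : W ⟶ U)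

def toGlueF (j : ℤ) : W.X j ⟶ glueX L U n Z j :=
  if h : j ≤ n then α.f j ≫ eqToHom (glueX_of_le h).symm
  else if h' : j = n + 1 then
    eqToHom (congrArg W.X h') ≫ z ≫ eqToHom (by rw [h']; exact glueX_succ.symm)
  else β.f j ≫ eqToHom (glueX_of_lt (by omega)).symm

lemma toGlueF_of_le {j : ℤ} (h : j ≤ n) :
    toGlueF α z β j = α.f j ≫ eqToHom (glueX_of_le h).symm :=
  dif_pos h

lemma toGlueF_succ : toGlueF α z β (n + 1) = z ≫ eqToHom glueX_succ.symm := by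
  simp [toGlueF]

lemma toGlueF_of_lt {j : ℤ} (h : n + 1 < j) :
    toGlueF α z β j = β.f j ≫ eqToHom (glueX_of_lt h).symm := by
  rw [toGlueF, dif_neg (by omega), dif_neg (by omega)]

def toGlue (hαz : W.d n (n + 1) ≫ z = α.f n ≫ l)
    (hzβ : z ≫ u = W.d (n + 1) (n + 1 + 1) ≫ β.f (n + 1 + 1)) :
    W ⟶ glue L U n Z l u hl hlu hu :=
  CochainComplex.ofHom (toGlueF α z β) fun j => by
    obtain h | rfl | rfl | h : j + 1 ≤ n ∨ j = n ∨ j = n + 1 ∨ n + 1 < j := by omega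
    · simp [toGlueF_of_le α z β h, toGlueF_of_le α z β (show j ≤ n by omega),
        glueD_of_le h]
    · simp [toGlueF_of_le α z β le_rfl, toGlueF_succ, glueD_self, reassoc_of% hαz]
    · simp [toGlueF_succ, toGlueF_of_lt α z β (show n + 1 < n + 1 + 1 by omega), glueD_succ,
        reassoc_of% hzβ]
    · simp [toGlueF_of_lt α z β h, toGlueF_of_lt α z β (show n + 1 < j + 1 by omega),
        glueD_of_lt h]

end ToGlue

section FromGlue

variable {W : CochainComplex C ℤ} (α : L ⟶ W) (z : Z ⟶ W.X (n + 1)) (β : U ⟶ W)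

def fromGlueF (j : ℤ) : glueX L U n Z j ⟶ W.X j :=
  if h : j ≤ n then eqToHom (glueX_of_le h) ≫ α.f j
  else if h' : j = n + 1 then
    eqToHom (by rw [h']; exact glueX_succ) ≫ z ≫ eqToHom (congrArg W.X h'.symm)
  else eqToHom (glueX_of_lt (by omega)) ≫ β.f j

lemma fromGlueF_of_le {j : ℤ} (h : j ≤ n) :
    fromGlueF α z β j = eqToHom (glueX_of_le h) ≫ α.f j :=
  dif_pos h

lemma fromGlueF_succ : fromGlueF α z β (n + 1) = eqToHom glueX_succ ≫ z := by
  simp [fromGlueF]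

lemma fromGlueF_of_lt {j : ℤ} (h : n + 1 < j) :
    fromGlueF α z β j = eqToHom (glueX_of_lt h) ≫ β.f j := by
  rw [fromGlueF, dif_neg (by omega), dif_neg (by omega)]

def fromGlue (hαz : l ≫ z = α.f n ≫ W.d n (n + 1))
    (hzβ : u ≫ β.f (n + 1 + 1) = z ≫ W.d (n + 1) (n + 1 + 1)) :
    glue L U n Z l u hl hlu hu ⟶ W :=
  CochainComplex.ofHom (fromGlueF α z β) fun j => by
    obtain h | rfl | rfl | h : j + 1 ≤ n ∨ j = n ∨ j = n + 1 ∨ n + 1 < j := by omega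
    · simp [fromGlueF_of_le α z β h, fromGlueF_of_le α z β (show j ≤ n by omega),
        glueD_of_le h]
    · simp [fromGlueF_of_le α z β le_rfl, fromGlueF_succ, glueD_self, hαz]
    · simp [fromGlueF_succ, fromGlueF_of_lt α z β (show n + 1 < n + 1 + 1 by omega),
        glueD_succ, hzβ]
    · simp [fromGlueF_of_lt α z β h, fromGlueF_of_lt α z β (show n + 1 < j + 1 by omega),
        glueD_of_lt h]

end FromGlue

section Factor

variable {V W : CochainComplex C ℤ} {α : V ⟶ L} {z : V.X (n + 1) ⟶ Z} {β : V ⟶ U}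
  {α' : L ⟶ W} {z' : Z ⟶ W.X (n + 1)} {β' : U ⟶ W}
  (hαz : V.d n (n + 1) ≫ z = α.f n ≫ l)
  (hzβ : z ≫ u = V.d (n + 1) (n + 1 + 1) ≫ β.f (n + 1 + 1))
  (hαz' : l ≫ z' = α'.f n ≫ W.d n (n + 1))
  (hzβ' : u ≫ β'.f (n + 1 + 1) = z' ≫ W.d (n + 1) (n + 1 + 1))

lemma toGlue_comp_fromGlue {f : V ⟶ W} (hα : α ≫ α' = f) (hz : z ≫ z' = f.f (n + 1))
    (hβ : β ≫ β' = f) :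
    toGlue hl hlu hu α z β hαz hzβ ≫ fromGlue hl hlu hu α' z' β' hαz' hzβ' = f := by
  ext j
  change toGlueF α z β j ≫ fromGlueF α' z' β' j = f.f j
  obtain h | rfl | h : j ≤ n ∨ j = n + 1 ∨ n + 1 < j := by omega
  · simp [toGlueF_of_le α z β h, fromGlueF_of_le α' z' β' h, ← hα]
  · simp [toGlueF_succ, fromGlueF_succ, hz]
  · simp [toGlueF_of_lt α z β h, fromGlueF_of_lt α' z' β' h, ← hβ]

lemma isSplitMono_of_isSplitMono_toGlue (_ : IsSplitMono (toGlue hl hlu hu α z β hαz hzβ)) :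
    (∀ j ≤ n, IsSplitMono (α.f j)) ∧ IsSplitMono z ∧ ∀ j, n + 1 < j → IsSplitMono (β.f j) := by
  have hF (j : ℤ) : IsSplitMono (toGlueF α z β j) :=
    inferInstanceAs
      (IsSplitMono ((HomologicalComplex.eval _ _ j).map (toGlue hl hlu hu α z β hαz hzβ)))
  refine ⟨fun j h => ?_, ?_, fun j h => ?_⟩
  · exact isSplitMono_of_comp (toGlueF_of_le α z β h ▸ hF j)
  · exact isSplitMono_of_comp (toGlueF_succ α z β ▸ hF (n + 1))
  · exact isSplitMono_of_comp (toGlueF_of_lt α z β h ▸ hF j)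

lemma isSplitEpi_of_isSplitEpi_fromGlue (_ : IsSplitEpi (fromGlue hl hlu hu α' z' β' hαz' hzβ')) :
    (∀ j ≤ n, IsSplitEpi (α'.f j)) ∧ IsSplitEpi z' ∧ ∀ j, n + 1 < j → IsSplitEpi (β'.f j) := by
  have hF (j : ℤ) : IsSplitEpi (fromGlueF α' z' β' j) :=
    inferInstanceAs
      (IsSplitEpi ((HomologicalComplex.eval _ _ j).map (fromGlue hl hlu hu α' z' β' hαz' hzβ')))
  refine ⟨fun j h => ?_, ?_, fun j h => ?_⟩
  · exact isSplitEpi_of_comp (fromGlueF_of_le α' z' β' h ▸ hF j)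
  · exact isSplitEpi_of_comp (fromGlueF_succ α' z' β' ▸ hF (n + 1))
  · exact isSplitEpi_of_comp (fromGlueF_of_lt α' z' β' h ▸ hF j)

end Factor

end Glue

def IsRadicalHom {M N : ModuleCat Λᵐᵒᵖ} (φ : M ⟶ N) : Prop :=
  LinearMap.range φ.hom ≤ (Ideal.jacobson (⊥ : Ideal Λᵐᵒᵖ)) • (⊤ : Submodule Λᵐᵒᵖ N)

section Radical

variable {M N P : ModuleCat Λᵐᵒᵖ}

lemma IsRadicalHom.comp_right {φ : M ⟶ N} (hφ : IsRadicalHom φ) (ψ : N ⟶ P) :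
    IsRadicalHom (φ ≫ ψ) := by
  rw [IsRadicalHom, ModuleCat.hom_comp, LinearMap.range_comp]
  calc Submodule.map ψ.hom (LinearMap.range φ.hom)
      ≤ Submodule.map ψ.hom ((Ideal.jacobson (⊥ : Ideal Λᵐᵒᵖ)) • ⊤) := Submodule.map_mono hφ
    _ = (Ideal.jacobson (⊥ : Ideal Λᵐᵒᵖ)) • Submodule.map ψ.hom ⊤ := Submodule.map_smul'' _ _ _
    _ ≤ _ := smul_mono_right _ le_top

lemma IsRadicalHom.comp_left (φ : M ⟶ N) {ψ : N ⟶ P} (hψ : IsRadicalHom ψ) :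
    IsRadicalHom (φ ≫ ψ) :=
  (LinearMap.range_comp_le_range φ.hom ψ.hom).trans hψ

end Radical

lemma IsMinimalProjective.isRadicalHom_d {X : Cplx Λ} (hX : IsMinimalProjective X) (i : ℤ) :
    IsRadicalHom (X.d i (i + 1)) :=
  hX.2.2 i

lemma isMinimalProjective_glue {L U : Cplx Λ} {n : ℤ} {Z : ModuleCat Λᵐᵒᵖ} {l : L.X n ⟶ Z}
    {u : Z ⟶ U.X (n + 1 + 1)} (hl : ∀ i, L.d i n ≫ l = 0) (hlu : l ≫ u = 0)
    (hu : ∀ i, u ≫ U.d (n + 1 + 1) i = 0) (hL : IsMinimalProjective L)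
    (hU : IsMinimalProjective U) [Module.Finite Λᵐᵒᵖ Z] [Module.Projective Λᵐᵒᵖ Z]
    (hlr : IsRadicalHom l) (hur : IsRadicalHom u) :
    IsMinimalProjective (glue L U n Z l u hl hlu hu) := by
  refine ⟨glueX_induction (P := fun M : ModuleCat Λᵐᵒᵖ => Module.Finite Λᵐᵒᵖ M) hL.1 ‹_› hU.1,
    glueX_induction (P := fun M : ModuleCat Λᵐᵒᵖ => Module.Projective Λᵐᵒᵖ M) hL.2.1 ‹_› hU.2.1,
    fun j => ?_⟩
  change IsRadicalHom (CochainComplex.of.d _ _ j (j + 1))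
  rw [CochainComplex.of_d]
  obtain h | rfl | rfl | h : j + 1 ≤ n ∨ j = n ∨ j = n + 1 ∨ n + 1 < j := by omega
  · rw [glueD_of_le h]; exact ((hL.isRadicalHom_d j).comp_right _).comp_left _
  · rw [glueD_self]; exact (hlr.comp_right _).comp_left _
  · rw [glueD_succ]; exact (hur.comp_right _).comp_left _
  · rw [glueD_of_lt h]; exact ((hU.isRadicalHom_d j).comp_right _).comp_left _

namespace IrreducibleC

variable {X Y : Cplx Λ} {f : X ⟶ Y}

lemma glue_dichotomy (hf : IrreducibleC f) {L U : Cplx Λ} {n : ℤ} {Z : ModuleCat Λᵐᵒᵖ}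
    {l : L.X n ⟶ Z} {u : Z ⟶ U.X (n + 1 + 1)} {hl : ∀ i, L.d i n ≫ l = 0} {hlu : l ≫ u = 0}
    {hu : ∀ i, u ≫ U.d (n + 1 + 1) i = 0} (hG : IsMinimalProjective (glue L U n Z l u hl hlu hu))
    {α : X ⟶ L} {z : X.X (n + 1) ⟶ Z} {β : X ⟶ U} {α' : L ⟶ Y} {z' : Z ⟶ Y.X (n + 1)}
    {β' : U ⟶ Y} (hαz : X.d n (n + 1) ≫ z = α.f n ≫ l)
    (hzβ : z ≫ u = X.d (n + 1) (n + 1 + 1) ≫ β.f (n + 1 + 1))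
    (hαz' : l ≫ z' = α'.f n ≫ Y.d n (n + 1))
    (hzβ' : u ≫ β'.f (n + 1 + 1) = z' ≫ Y.d (n + 1) (n + 1 + 1))
    (hα : α ≫ α' = f) (hz : z ≫ z' = f.f (n + 1)) (hβ : β ≫ β' = f) :
    ((∀ j ≤ n, IsSplitMono (α.f j)) ∧ IsSplitMono z ∧ ∀ j, n + 1 < j → IsSplitMono (β.f j)) ∨
      ((∀ j ≤ n, IsSplitEpi (α'.f j)) ∧ IsSplitEpi z' ∧ ∀ j, n + 1 < j → IsSplitEpi (β'.f j)) :=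
  (hf.2.2 _ hG _ _ (toGlue_comp_fromGlue hl hlu hu hαz hzβ hαz' hzβ' hα hz hβ).symm).imp
    (isSplitMono_of_isSplitMono_toGlue hl hlu hu hαz hzβ)
    (isSplitEpi_of_isSplitEpi_fromGlue hl hlu hu hαz' hzβ')

variable (hX : IsMinimalProjective X) (hY : IsMinimalProjective Y)
include hX hY

lemma factor_dichotomy (hf : IrreducibleC f) {n : ℤ} {Z : ModuleCat Λᵐᵒᵖ}
    [Module.Finite Λᵐᵒᵖ Z] [Module.Projective Λᵐᵒᵖ Z] {g : X.X (n + 1) ⟶ Z}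
    {h : Z ⟶ Y.X (n + 1)} (hgh : g ≫ h = f.f (n + 1)) :
    (IsSplitMono g ∧ ∀ j, n + 1 < j → IsSplitMono (f.f j)) ∨
      (IsSplitEpi h ∧ ∀ j ≤ n, IsSplitEpi (f.f j)) := by
  have hlu : (X.d n (n + 1) ≫ g) ≫ h ≫ Y.d (n + 1) (n + 1 + 1) = 0 := by
    simp [reassoc_of% hgh]
  have hG := isMinimalProjective_glue (by simp) hlu (by simp) hX hY
    ((hX.isRadicalHom_d n).comp_right g) ((hY.isRadicalHom_d (n + 1)).comp_left h)
  rcases hf.glue_dichotomy hG (α := 𝟙 X) (β := f) (α' := f) (β' := 𝟙 Y) (by simp)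
    (by simp [reassoc_of% hgh]) (by simp [hgh]) (by simp) (by simp) hgh (by simp)
    with ⟨-, hg, hβ⟩ | ⟨hα', hh, -⟩
  · exact Or.inl ⟨hg, hβ⟩
  · exact Or.inr ⟨hh, hα'⟩

lemma tail_dichotomy (hf : IrreducibleC f) (m : ℤ) :
    (∀ j, m ≤ j → IsSplitMono (f.f j)) ∨ ∀ j, j < m → IsSplitEpi (f.f j) := by
  obtain ⟨n, rfl⟩ : ∃ n, m = n + 1 := ⟨m - 1, by omega⟩
  have := hY.1 (n + 1)
  have := hY.2.1 (n + 1)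
  refine (factor_dichotomy hX hY hf (Category.comp_id (f.f (n + 1)))).imp
    (fun ⟨hm, hlt⟩ j hj => ?_) (fun ⟨_, hle⟩ j hj => hle j (by omega))
  obtain rfl | hj := hj.eq_or_lt
  exacts [hm, hlt j hj]

lemma dichotomy_of_epi_splitEpi_mono (hf : IrreducibleC f) {n : ℤ} [Epi (f.f n)]
    [IsSplitEpi (f.f (n + 1))] [Mono (f.f (n + 1 + 1))] :
    (∀ j, j ≤ n + 1 → IsSplitMono (f.f j)) ∨ ∀ j, n + 1 < j → IsSplitEpi (f.f j) := by
  set s := section_ (f.f (n + 1))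
  have hsd : s ≫ X.d (n + 1) (n + 1 + 1) ≫ f.f (n + 1 + 1) = Y.d (n + 1) (n + 1 + 1) := by
    rw [← f.comm, IsSplitEpi.id_assoc]
  have hs : f.f (n + 1) ≫ s ≫ X.d (n + 1) (n + 1 + 1) = X.d (n + 1) (n + 1 + 1) := by
    rw [← cancel_mono (f.f (n + 1 + 1)), Category.assoc, Category.assoc, hsd, f.comm]
  have hlu : Y.d n (n + 1) ≫ s ≫ X.d (n + 1) (n + 1 + 1) = 0 := by
    rw [← cancel_epi (f.f n), f.comm_assoc, hs]
    simp
  have := hY.1 (n + 1)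
  have := hY.2.1 (n + 1)
  have hG := isMinimalProjective_glue (by simp) hlu (by simp) hY hX
    (hY.isRadicalHom_d n) ((hX.isRadicalHom_d (n + 1)).comp_left s)
  rcases hf.glue_dichotomy hG (α := f) (z := f.f (n + 1)) (β := 𝟙 X) (α' := 𝟙 Y) (z' := 𝟙 _)
    (β' := f) (by simp) (by simp [hs]) (by simp) (by simp [hsd]) (by simp) (by simp) (by simp)
    with ⟨hα, hz, -⟩ | ⟨-, -, hβ'⟩
  · refine Or.inl fun j hj => ?_
    obtain hj | rfl := hj.lt_or_eq
    exacts [hα j (by omega), hz]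
  · exact Or.inr hβ'

end IrreducibleC

/-- The least `ℓ` past which `M` holds everywhere gives the index `ℓ - 1`. -/
lemma exists_boundary_of_dichotomies {M E : ℤ → Prop} {a b : ℤ} (ha : ¬ M a) (hb : ¬ E b)
    (tail : ∀ m, (∀ j, m ≤ j → M j) ∨ ∀ j, j < m → E j)
    (mixed : ∀ n, E n → E (n + 1) → M (n + 1 + 1) →
      (∀ j, j ≤ n + 1 → M j) ∨ ∀ j, n + 1 < j → E j) :
    ∃ i, ¬ M i ∧ ¬ E i ∧ (∀ j, j < i → E j) ∧ ∀ j, i < j → M j := by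
  have bdd : ∀ m, (∀ j, m ≤ j → M j) → a < m := fun m hm => by
    by_contra! h
    exact ha (hm a h)
  have hb1 : ∀ j, b + 1 ≤ j → M j :=
    (tail (b + 1)).resolve_right fun h => hb (h b (by omega))
  obtain ⟨ℓ, hℓ, hleast⟩ := Int.exists_least_of_bdd ⟨a + 1, bdd⟩ ⟨_, hb1⟩
  obtain ⟨i, rfl⟩ : ∃ i, ℓ = i + 1 := ⟨ℓ - 1, by omega⟩
  have hM : ¬ M i := fun h => by
    have := hleast i fun j hj => (hj.eq_or_lt).elim (· ▸ h) (hℓ j ·)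
    omega
  have hlt : ∀ j, j < i → E j :=
    (tail i).resolve_left fun h => hM (h i le_rfl)
  refine ⟨i, hM, fun hE => ?_, hlt, fun j hj => hℓ j hj⟩
  obtain ⟨n, rfl⟩ : ∃ n, i = n + 1 := ⟨i - 1, by omega⟩
  rcases mixed n (hlt n (by omega)) hE (hℓ _ le_rfl) with h | h
  · exact ha (h a (by have := bdd _ hℓ; omega))
  · refine hb ?_
    obtain hbi | rfl | hbi := lt_trichotomy b (n + 1)
    exacts [hlt b hbi, hE, h b hbi]

theorem sirreducible_of_irreducible
    {Λ : Type} [Ring Λ]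
    (X Y : Cplx Λ) (hX : IsMinimalProjective X) (hY : IsMinimalProjective Y)
    (f : X ⟶ Y) (hf : IrreducibleC f) (t : ℤ)
    (h₁ : ∀ j : ℤ, 0 < j → IsZero (X.X j))
    (h₂ : ∀ j : ℤ, j < -t → IsZero (Y.X j))
    (h₃ : ¬ IsZero (X.X (-(t + 1))))
    (h₄ : ∃ j : ℤ, 0 < j ∧ ¬ IsZero (Y.X j)) :
    Sirreducible f := by
  obtain ⟨b, hb, hYb⟩ := h₄
  have hMono : ¬ IsSplitMono (f.f (-(t + 1))) := fun _ =>
    h₃ ((h₂ _ (by omega)).of_mono (f.f _))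
  have hEpi : ¬ IsSplitEpi (f.f b) := fun _ => hYb ((h₁ b hb).of_epi (f.f b))
  obtain ⟨i, hM, hE, hlt, hgt⟩ := exists_boundary_of_dichotomies hMono hEpi
    (hf.tail_dichotomy hX hY) fun n _ _ _ => hf.dichotomy_of_epi_splitEpi_mono hX hY
  refine ⟨i, ⟨hM, hE, fun Z _ _ g h hgh => ?_⟩, hlt, hgt⟩
  obtain ⟨n, rfl⟩ : ∃ n, i = n + 1 := ⟨i - 1, by omega⟩
  exact (hf.factor_dichotomy hX hY hgh.symm).imp And.left And.left

end ARShapes
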